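/- Let C ⊆ {0,1}ⁿ be a neural code and c ∈ {0,1}ⁿ. If g ∈ CF(J_C) satisfies g(c) = 0, then g ∈ MP(C, {c}); moreover, for every index j with 1 ≤ j ≤ n, the reduced product (g·(x_j − c_j))_R is either 0, equal to g, or a proper polynomial multiple of g. -/

import Mathlib

open MvPolynomial

/-- The characteristic polynomial `ρ_v = ∏ i, (1 - v_i - x_i)` of a word `v ∈ {0,1}ⁿ = 𝔽₂ⁿ`. -/
noncomputable def rho (n : ℕ) (v : Fin n → ZMod 2) : MvPolynomial (Fin n) (ZMod 2) :=
  ∏ i, (1 - C (v i) - X i)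

/-- The neural ideal `J_C = ⟨ρ_v : v ∉ C⟩` of a neural code `C ⊆ {0,1}ⁿ`. -/
noncomputable def neuralIdeal (n : ℕ) (Co : Set (Fin n → ZMod 2)) :
    Ideal (MvPolynomial (Fin n) (ZMod 2)) :=
  Ideal.span { p | ∃ v, v ∉ Co ∧ p = rho n v }

/-- A pseudo-monomial: `∏_{i∈σ} x_i ∏_{j∈τ} (1 - x_j)` with `σ, τ` disjoint. -/
def IsPseudoMonomial (n : ℕ) (f : MvPolynomial (Fin n) (ZMod 2)) : Prop :=
  ∃ σ τ : Finset (Fin n), Disjoint σ τ ∧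
    f = (∏ i ∈ σ, X i) * ∏ j ∈ τ, (1 - X j)

/-- `f` is a minimal pseudo-monomial of the ideal `J`. -/
def IsMinimalPM (n : ℕ) (J : Ideal (MvPolynomial (Fin n) (ZMod 2)))
    (f : MvPolynomial (Fin n) (ZMod 2)) : Prop :=
  f ∈ J ∧ IsPseudoMonomial n f ∧
    ¬ ∃ g, IsPseudoMonomial n g ∧ g ∈ J ∧ g.totalDegree < f.totalDegree ∧
      ∃ h, f = g * h

/-- The canonical form `CF(J)`: the set of all minimal pseudo-monomials of `J`. -/
def CF (n : ℕ) (J : Ideal (MvPolynomial (Fin n) (ZMod 2))) :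
    Set (MvPolynomial (Fin n) (ZMod 2)) :=
  { f | IsMinimalPM n J f }

/-- An ideal is a pseudo-monomial ideal if it is generated by finitely many pseudo-monomials. -/
def IsPseudoMonomialIdeal (n : ℕ) (J : Ideal (MvPolynomial (Fin n) (ZMod 2))) : Prop :=
  ∃ S : Finset (MvPolynomial (Fin n) (ZMod 2)),
    (∀ f ∈ S, IsPseudoMonomial n f) ∧ J = Ideal.span (S : Set (MvPolynomial (Fin n) (ZMod 2)))

/-- A polynomial is square-free if every variable occurs with exponent at most 1
in every monomial of its support. -/
def IsSquareFreePoly (n : ℕ) (f : MvPolynomial (Fin n) (ZMod 2)) : Prop :=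
  ∀ m ∈ f.support, ∀ i, m i ≤ 1

/-- The Boolean ideal `B = ⟨x_i (1 - x_i) : 1 ≤ i ≤ n⟩`. -/
noncomputable def boolIdeal (n : ℕ) : Ideal (MvPolynomial (Fin n) (ZMod 2)) :=
  Ideal.span { p | ∃ i : Fin n, p = X i * (1 - X i) }

/-- The square-free representative `h_R` of `h` modulo the Boolean ideal:
replace every exponent by its truncation at 1. -/
noncomputable def sqReduce (n : ℕ) (h : MvPolynomial (Fin n) (ZMod 2)) :
    MvPolynomial (Fin n) (ZMod 2) :=
  ∑ m ∈ h.support,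
    monomial (Finsupp.mapRange (fun e => min e 1) (by simp) m) (coeff m h)

/-- The set of reduced products `P(C,D) = {(f g)_R : f ∈ CF(J_C), g ∈ CF(J_D)}`. -/
def reducedProducts (n : ℕ) (Co D : Set (Fin n → ZMod 2)) :
    Set (MvPolynomial (Fin n) (ZMod 2)) :=
  { p | ∃ f ∈ CF n (neuralIdeal n Co), ∃ g ∈ CF n (neuralIdeal n D), p = sqReduce n (f * g) }

/-- The set of minimal reduced products `MP(C,D)`. -/
def minReducedProducts (n : ℕ) (Co D : Set (Fin n → ZMod 2)) :
    Set (MvPolynomial (Fin n) (ZMod 2)) :=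
  { h | h ∈ reducedProducts n Co D ∧ h ≠ 0 ∧
    ¬ ∃ f ∈ reducedProducts n Co D, ∃ g : MvPolynomial (Fin n) (ZMod 2),
      1 ≤ g.totalDegree ∧ h = f * g }

/-- The code `C(U)` of a cover `U = {U_1, …, U_n}` of a topological space `X`. -/
def codeOfCover {X : Type*} [TopologicalSpace X] (n : ℕ) (U : Fin n → Set X) :
    Set (Fin n → ZMod 2) :=
  { v | ((⋂ i ∈ { i : Fin n | v i = 1 }, U i) \ ⋃ j ∈ { j : Fin n | v j = 0 }, U j).Nonempty }

/-!
Write `g = x^σ (1-x)^τ`. Modulo the Boolean ideal the `x_i` are idempotent, so the reduced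
product of `x^σ (1-x)^τ` and `x^σ' (1-x)^τ'` is `0` when `σ ∪ σ'` meets `τ ∪ τ'`, and otherwise
the square-free pseudo-monomial `x^(σ ∪ σ') (1-x)^(τ ∪ τ') = g · x^(σ' \ σ) (1-x)^(τ' \ τ)`.

Since `g(c) = 0`, some linear factor `ℓ = x_k - c_k` of `g` vanishes at `c`; being of degree one,
it is a minimal pseudo-monomial of `J_{c}`, and `(g ℓ)_R = g`, so `g ∈ P(C, {c})`. Every nonzero
element of `P(C, D)` is a pseudo-monomial multiple of an element of `CF(J_C)`, hence lies in
`J_C`; a factorization `g = f p` with `deg p ≥ 1` would therefore contradict the minimality of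
`g`. The trichotomy is the product formula applied to the linear pseudo-monomial `x_j - c_j`.
-/

section PseudoMonomial

variable {ι S : Type*} [CommRing S]

def pseudoMonomial (e : ι → S) (σ τ : Finset ι) : S :=
  (∏ i ∈ σ, e i) * ∏ j ∈ τ, (1 - e j)

theorem pseudoMonomial_empty_empty (e : ι → S) : pseudoMonomial e ∅ ∅ = 1 := by
  simp [pseudoMonomial]

theorem map_pseudoMonomial {T : Type*} [CommRing T] (φ : S →+* T) (e : ι → S) (σ τ : Finset ι) :
    φ (pseudoMonomial e σ τ) = pseudoMonomial (fun i => φ (e i)) σ τ := by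
  simp [pseudoMonomial, map_prod]

theorem pseudoMonomial_eq_zero_iff [IsDomain S] {e : ι → S} {σ τ : Finset ι} :
    pseudoMonomial e σ τ = 0 ↔ (∃ i ∈ σ, e i = 0) ∨ ∃ j ∈ τ, e j = 1 := by
  simp only [pseudoMonomial, mul_eq_zero, Finset.prod_eq_zero_iff, sub_eq_zero]
  simp only [eq_comm (a := (1 : S))]

variable [DecidableEq ι]

theorem pseudoMonomial_union (e : ι → S) (σ τ σ' τ' : Finset ι) :
    pseudoMonomial e (σ ∪ σ') (τ ∪ τ') =
      pseudoMonomial e σ τ * pseudoMonomial e (σ' \ σ) (τ' \ τ) := by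
  rw [pseudoMonomial, pseudoMonomial, pseudoMonomial, ← Finset.union_sdiff_self_eq_union,
    ← τ.union_sdiff_self_eq_union, Finset.prod_union Finset.disjoint_sdiff,
    Finset.prod_union Finset.disjoint_sdiff]
  ring

theorem Finset.prod_mul_prod_of_isIdempotentElem {M : Type*} [CommMonoid M] {e : ι → M}
    (he : ∀ i, IsIdempotentElem (e i)) (s t : Finset ι) :
    (∏ i ∈ s, e i) * ∏ i ∈ t, e i = ∏ i ∈ s ∪ t, e i := by
  rw [← Finset.prod_union_inter, ← Finset.prod_sdiff (Finset.inter_subset_union (s := s) (t := t)),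
    mul_assoc, ← Finset.prod_mul_distrib, Finset.prod_congr rfl fun i _ => (he i).eq]

theorem pseudoMonomial_mul_of_isIdempotentElem {e : ι → S} (he : ∀ i, IsIdempotentElem (e i))
    (σ τ σ' τ' : Finset ι) :
    pseudoMonomial e σ τ * pseudoMonomial e σ' τ' = pseudoMonomial e (σ ∪ σ') (τ ∪ τ') := by
  rw [pseudoMonomial, pseudoMonomial, pseudoMonomial, mul_mul_mul_comm,
    Finset.prod_mul_prod_of_isIdempotentElem he,
    Finset.prod_mul_prod_of_isIdempotentElem fun i => (he i).one_sub]

theorem pseudoMonomial_eq_zero_of_not_disjoint {e : ι → S} (he : ∀ i, IsIdempotentElem (e i))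
    {σ τ : Finset ι} (h : ¬Disjoint σ τ) :
    pseudoMonomial e σ τ = 0 := by
  obtain ⟨k, hkσ, hkτ⟩ := Finset.not_disjoint_iff.mp h
  rw [pseudoMonomial, ← Finset.mul_prod_erase σ _ hkσ, ← Finset.mul_prod_erase τ _ hkτ,
    mul_mul_mul_comm, (he k).mul_one_sub_self, zero_mul]

end PseudoMonomial

section Polynomial

variable {ι R : Type*} [CommRing R]

theorem MvPolynomial.totalDegree_X_sub_C [Nontrivial R] (k : ι) (b : R) :
    (X k - C b : MvPolynomial ι R).totalDegree = 1 := by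
  rw [sub_eq_add_neg, totalDegree_add_eq_left_of_totalDegree_lt] <;> simp

theorem MvPolynomial.totalDegree_one_sub_X [Nontrivial R] (k : ι) :
    (1 - X k : MvPolynomial ι R).totalDegree = 1 := by
  rw [← neg_sub, totalDegree_neg, ← C_1, totalDegree_X_sub_C]

theorem eval_pseudoMonomial (v : ι → R) (σ τ : Finset ι) :
    eval v (pseudoMonomial (X : ι → MvPolynomial ι R) σ τ) = pseudoMonomial v σ τ := by
  simp only [map_pseudoMonomial, eval_X]

variable [IsDomain R]

theorem pseudoMonomial_X_ne_zero (σ τ : Finset ι) :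
    (pseudoMonomial X σ τ : MvPolynomial ι R) ≠ 0 := by
  have hX : ∀ j : ι, (X j : MvPolynomial ι R) ≠ 1 := fun j h => by
    simpa [h] using totalDegree_X (R := R) j
  simp [pseudoMonomial_eq_zero_iff, X_ne_zero, hX]

theorem one_le_totalDegree_pseudoMonomial [DecidableEq ι] {σ τ : Finset ι}
    (h : (σ ∪ τ).Nonempty) :
    1 ≤ (pseudoMonomial X σ τ : MvPolynomial ι R).totalDegree := by
  obtain ⟨k, hk⟩ := h
  have hne := pseudoMonomial_X_ne_zero (R := R) σ τ
  rcases Finset.mem_union.mp hk with hk | hk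
  · rw [← totalDegree_X (R := R) k]
    exact totalDegree_le_of_dvd_of_isDomain
      (dvd_mul_of_dvd_left (Finset.dvd_prod_of_mem _ hk) _) hne
  · rw [← totalDegree_one_sub_X (R := R) k]
    exact totalDegree_le_of_dvd_of_isDomain
      (dvd_mul_of_dvd_right (Finset.dvd_prod_of_mem (fun j => 1 - X j) hk) _) hne

end Polynomial

section SquareFreeReduction

variable {n : ℕ}

theorem sqReduce_eq_mapDomainLinearMap (h : MvPolynomial (Fin n) (ZMod 2)) :
    sqReduce n h = AddMonoidAlgebra.mapDomainLinearMap (ZMod 2) (ZMod 2)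
      (Finsupp.mapRange (fun e => min e 1) (by simp)) h := by
  conv_rhs => rw [← h.support_sum_monomial_coeff]
  simp only [sqReduce, map_sum, ← single_eq_monomial, AddMonoidAlgebra.mapDomainLinearMap_single]

theorem sqReduce_add (p q : MvPolynomial (Fin n) (ZMod 2)) :
    sqReduce n (p + q) = sqReduce n p + sqReduce n q := by
  simp only [sqReduce_eq_mapDomainLinearMap, map_add]

theorem sqReduce_sub (p q : MvPolynomial (Fin n) (ZMod 2)) :
    sqReduce n (p - q) = sqReduce n p - sqReduce n q := by
  simp only [sqReduce_eq_mapDomainLinearMap, map_sub]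

theorem sqReduce_zero : sqReduce n 0 = 0 := by
  simp only [sqReduce_eq_mapDomainLinearMap, map_zero]

theorem sqReduce_monomial (m : Fin n →₀ ℕ) (a : ZMod 2) :
    sqReduce n (monomial m a) = monomial (Finsupp.mapRange (fun e => min e 1) (by simp) m) a := by
  simp only [sqReduce_eq_mapDomainLinearMap, ← single_eq_monomial,
    AddMonoidAlgebra.mapDomainLinearMap_single]

theorem sqReduce_mul_X_mul_one_sub_X (q : MvPolynomial (Fin n) (ZMod 2)) (i : Fin n) :
    sqReduce n (q * (X i * (1 - X i))) = 0 := by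
  induction q using MvPolynomial.induction_on' with
  | monomial m a =>
    have hexpand : monomial m a * (X i * (1 - X i)) =
        monomial (m + Finsupp.single i 1) a -
          monomial (m + Finsupp.single i 1 + Finsupp.single i 1) a := by
      simp only [X, mul_sub, mul_one, monomial_mul, add_assoc]
    rw [hexpand, sqReduce_sub, sqReduce_monomial, sqReduce_monomial, sub_eq_zero]
    congr 2
    ext k
    simp only [Finsupp.mapRange_apply, Finsupp.add_apply, Finsupp.single_apply]
    split_ifs <;> omega
  | add p q hp hq => rw [add_mul, sqReduce_add, hp, hq, add_zero]

theorem sqReduce_eq_zero_of_mem_boolIdeal {b : MvPolynomial (Fin n) (ZMod 2)}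
    (hb : b ∈ boolIdeal n) : sqReduce n b = 0 := by
  suffices ∀ q, sqReduce n (q * b) = 0 by simpa using this 1
  induction hb using Submodule.span_induction with
  | mem x hx =>
    obtain ⟨i, rfl⟩ := hx
    exact fun q => sqReduce_mul_X_mul_one_sub_X q i
  | zero => simp [sqReduce_zero]
  | add x y _ _ hx hy => intro q; rw [mul_add, sqReduce_add, hx, hy, add_zero]
  | smul a x _ hx => intro q; rw [smul_eq_mul, ← mul_assoc, hx]

theorem sqReduce_congr {p q : MvPolynomial (Fin n) (ZMod 2)}
    (h : Ideal.Quotient.mk (boolIdeal n) p = Ideal.Quotient.mk (boolIdeal n) q) :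
    sqReduce n p = sqReduce n q := by
  rw [← sub_eq_zero, ← sqReduce_sub]
  exact sqReduce_eq_zero_of_mem_boolIdeal (Ideal.Quotient.eq.mp h)

theorem sqReduce_eq_self {p : MvPolynomial (Fin n) (ZMod 2)} (hp : IsSquareFreePoly n p) :
    sqReduce n p = p := by
  conv_rhs => rw [← p.support_sum_monomial_coeff]
  refine Finset.sum_congr rfl fun m hm => ?_
  congr
  ext i
  simpa using hp m hm i

theorem isSquareFreePoly_pseudoMonomial {σ τ : Finset (Fin n)} (h : Disjoint σ τ) :
    IsSquareFreePoly n (pseudoMonomial X σ τ) := by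
  intro m hm i
  have hσ : degreeOf i (∏ k ∈ σ, X k : MvPolynomial (Fin n) (ZMod 2)) ≤ if i ∈ σ then 1 else 0 :=
    calc _ ≤ ∑ k ∈ σ, degreeOf i (X k : MvPolynomial (Fin n) (ZMod 2)) := degreeOf_prod_le ..
      _ = _ := by simp [degreeOf_X]
  have hτ : degreeOf i (∏ k ∈ τ, (1 - X k) : MvPolynomial (Fin n) (ZMod 2)) ≤
      if i ∈ τ then 1 else 0 :=
    calc _ ≤ ∑ k ∈ τ, degreeOf i (1 - X k : MvPolynomial (Fin n) (ZMod 2)) := degreeOf_prod_le ..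
      _ ≤ ∑ k ∈ τ, degreeOf i (X k : MvPolynomial (Fin n) (ZMod 2)) :=
        Finset.sum_le_sum fun k _ => (degreeOf_sub_le i 1 (X k)).trans (by simp)
      _ = _ := by simp [degreeOf_X]
  have hστ : i ∈ σ → i ∉ τ := fun hi => Finset.disjoint_left.mp h hi
  calc m i ≤ degreeOf i (pseudoMonomial X σ τ) := monomial_le_degreeOf i hm
    _ ≤ _ := degreeOf_mul_le ..
    _ ≤ (if i ∈ σ then 1 else 0) + (if i ∈ τ then 1 else 0) := add_le_add hσ hτ
    _ ≤ 1 := by split_ifs <;> simp_all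

theorem isIdempotentElem_mk_X (i : Fin n) :
    IsIdempotentElem (Ideal.Quotient.mk (boolIdeal n) (X i)) := by
  rw [isIdempotentElem_iff_mul_one_sub_self, ← map_one (Ideal.Quotient.mk _), ← map_sub,
    ← map_mul, Ideal.Quotient.eq_zero_iff_mem]
  exact Ideal.subset_span ⟨i, rfl⟩

theorem sqReduce_pseudoMonomial_mul (σ τ σ' τ' : Finset (Fin n)) :
    sqReduce n (pseudoMonomial X σ τ * pseudoMonomial X σ' τ') =
      if Disjoint (σ ∪ σ') (τ ∪ τ') then pseudoMonomial X (σ ∪ σ') (τ ∪ τ') else 0 := by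
  have hmk : Ideal.Quotient.mk (boolIdeal n) (pseudoMonomial X σ τ * pseudoMonomial X σ' τ') =
      Ideal.Quotient.mk (boolIdeal n) (pseudoMonomial X (σ ∪ σ') (τ ∪ τ')) := by
    rw [map_mul, map_pseudoMonomial, map_pseudoMonomial, map_pseudoMonomial,
      pseudoMonomial_mul_of_isIdempotentElem isIdempotentElem_mk_X]
  rw [sqReduce_congr hmk]
  split_ifs with h
  · exact sqReduce_eq_self (isSquareFreePoly_pseudoMonomial h)
  · rw [← sqReduce_zero (n := n)]
    apply sqReduce_congr
    rw [map_pseudoMonomial, pseudoMonomial_eq_zero_of_not_disjoint isIdempotentElem_mk_X h,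
      map_zero]

end SquareFreeReduction

section NeuralIdeal

variable {n : ℕ}

theorem eval_eq_zero_of_mem_neuralIdeal {D : Set (Fin n → ZMod 2)}
    {p : MvPolynomial (Fin n) (ZMod 2)} (hp : p ∈ neuralIdeal n D) {c : Fin n → ZMod 2}
    (hc : c ∈ D) : eval c p = 0 := by
  suffices neuralIdeal n D ≤ RingHom.ker (eval c) from this hp
  rw [neuralIdeal, Ideal.span_le]
  rintro _ ⟨v, hv, rfl⟩
  obtain ⟨i, hi⟩ := Function.ne_iff.mp (ne_of_mem_of_not_mem hc hv).symm
  rw [SetLike.mem_coe, RingHom.mem_ker, rho, map_prod]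
  refine Finset.prod_eq_zero (Finset.mem_univ i) ?_
  rw [map_sub, map_sub, map_one, eval_C, eval_X]
  exact (by decide : ∀ a b : ZMod 2, a ≠ b → 1 - a - b = 0) _ _ hi

theorem neuralIdeal_ne_top {D : Set (Fin n → ZMod 2)} (hD : D.Nonempty) : neuralIdeal n D ≠ ⊤ := by
  obtain ⟨c, hc⟩ := hD
  intro h
  have hone : (1 : MvPolynomial (Fin n) (ZMod 2)) ∈ neuralIdeal n D := h ▸ Submodule.mem_top
  simpa using eval_eq_zero_of_mem_neuralIdeal hone hc

/-- `x^σ (1-x)^τ` is the sum of the `ρ_w` over the points `w` where it takes the value `1`. -/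
theorem pseudoMonomial_eq_sum_rho {σ τ : Finset (Fin n)} (h : Disjoint σ τ) :
    pseudoMonomial X σ τ = ∑ w ∈ Fintype.piFinset fun i =>
      if i ∈ σ then {1} else if i ∈ τ then {0} else Finset.univ, rho n w := by
  have hfactor : ∀ i, ∑ a ∈ (if i ∈ σ then {1} else if i ∈ τ then {0} else Finset.univ),
      (1 - C a - X i : MvPolynomial (Fin n) (ZMod 2)) =
        (if i ∈ σ then X i else 1) * (if i ∈ τ then 1 - X i else 1) := by
    intro i
    by_cases hσ : i ∈ σ
    · simp [hσ, Finset.disjoint_left.mp h hσ, CharTwo.neg_eq]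
    by_cases hτ : i ∈ τ
    · simp [hσ, hτ]
    · rw [if_neg hσ, if_neg hσ, if_neg hτ, if_neg hτ, mul_one,
        show (Finset.univ : Finset (ZMod 2)) = {0, 1} from rfl, Finset.sum_pair zero_ne_one,
        map_zero, map_one]
      linear_combination (-X i : MvPolynomial (Fin n) (ZMod 2)) *
        CharTwo.two_eq_zero (R := MvPolynomial (Fin n) (ZMod 2))
  simp only [rho]
  rw [← Finset.prod_univ_sum _ fun i a => (1 - C a - X i : MvPolynomial (Fin n) (ZMod 2))]
  simp only [hfactor, Finset.prod_mul_distrib, Finset.prod_ite_mem, Finset.univ_inter,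
    pseudoMonomial]

theorem pseudoMonomial_mem_neuralIdeal {Co : Set (Fin n → ZMod 2)} {σ τ : Finset (Fin n)}
    (h : Disjoint σ τ) (hCo : ∀ v ∈ Co, eval v (pseudoMonomial X σ τ) = 0) :
    pseudoMonomial X σ τ ∈ neuralIdeal n Co := by
  rw [pseudoMonomial_eq_sum_rho h]
  refine Ideal.sum_mem _ fun w hw => Ideal.subset_span ⟨w, fun hwCo => ?_, rfl⟩
  have hvanish := hCo w hwCo
  rw [eval_pseudoMonomial, pseudoMonomial_eq_zero_iff] at hvanish
  rw [Fintype.mem_piFinset] at hw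
  rcases hvanish with ⟨i, hi, hwi⟩ | ⟨j, hj, hwj⟩
  · simpa [hi, hwi] using hw i
  · simpa [hj, Finset.disjoint_right.mp h hj, hwj] using hw j

end NeuralIdeal

section ReducedProducts

variable {n : ℕ}

theorem isPseudoMonomial_iff {f : MvPolynomial (Fin n) (ZMod 2)} :
    IsPseudoMonomial n f ↔ ∃ σ τ, Disjoint σ τ ∧ f = pseudoMonomial X σ τ :=
  Iff.rfl

theorem IsPseudoMonomial.ne_zero {f : MvPolynomial (Fin n) (ZMod 2)} (hf : IsPseudoMonomial n f) :
    f ≠ 0 := by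
  obtain ⟨σ, τ, -, rfl⟩ := isPseudoMonomial_iff.mp hf
  exact pseudoMonomial_X_ne_zero σ τ

theorem isMinimalPM_of_totalDegree_eq_one {J : Ideal (MvPolynomial (Fin n) (ZMod 2))}
    {f : MvPolynomial (Fin n) (ZMod 2)} (hJ : J ≠ ⊤) (hf : IsPseudoMonomial n f) (hfJ : f ∈ J)
    (hdeg : f.totalDegree = 1) : IsMinimalPM n J f := by
  refine ⟨hfJ, hf, ?_⟩
  rintro ⟨g, hg, hgJ, hlt, -⟩
  obtain ⟨a, rfl⟩ : ∃ a, g = C a := ⟨_, totalDegree_eq_zero_iff_eq_C.mp (by omega)⟩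
  have ha : a ≠ 0 := by
    rintro rfl
    exact hg.ne_zero (map_zero C)
  exact hJ (Ideal.eq_top_of_isUnit_mem _ hgJ ((isUnit_iff_ne_zero.mpr ha).map C))

theorem IsMinimalPM.ne_mul {J : Ideal (MvPolynomial (Fin n) (ZMod 2))}
    {g f p : MvPolynomial (Fin n) (ZMod 2)} (hg : IsMinimalPM n J g) (hf : IsPseudoMonomial n f)
    (hfJ : f ∈ J) (hp : 1 ≤ p.totalDegree) : g ≠ f * p := by
  rintro rfl
  have hfp := hg.2.1.ne_zero
  refine hg.2.2 ⟨f, hf, hfJ, ?_, p, rfl⟩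
  rw [totalDegree_mul_of_isDomain (left_ne_zero_of_mul hfp) (right_ne_zero_of_mul hfp)]
  omega

theorem sqReduce_pseudoMonomial_mul_of_subset {σ τ σ' τ' : Finset (Fin n)} (h : Disjoint σ τ)
    (hσ : σ' ⊆ σ) (hτ : τ' ⊆ τ) :
    sqReduce n (pseudoMonomial X σ τ * pseudoMonomial X σ' τ') = pseudoMonomial X σ τ := by
  rw [sqReduce_pseudoMonomial_mul, Finset.union_eq_left.mpr hσ, Finset.union_eq_left.mpr hτ,
    if_pos h]

theorem sqReduce_pseudoMonomial_mul_trichotomy (σ τ σ' τ' : Finset (Fin n)) :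
    let r := sqReduce n (pseudoMonomial X σ τ * pseudoMonomial X σ' τ')
    r = 0 ∨ r = pseudoMonomial X σ τ ∨
      ∃ p : MvPolynomial (Fin n) (ZMod 2), 1 ≤ p.totalDegree ∧ r = pseudoMonomial X σ τ * p := by
  rw [sqReduce_pseudoMonomial_mul]
  split_ifs
  · right
    rw [pseudoMonomial_union]
    by_cases hne : (σ' \ σ ∪ τ' \ τ).Nonempty
    · exact Or.inr ⟨_, one_le_totalDegree_pseudoMonomial hne, rfl⟩
    · obtain ⟨hσ, hτ⟩ := Finset.union_eq_empty.mp (Finset.not_nonempty_iff_eq_empty.mp hne)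
      rw [hσ, hτ, pseudoMonomial_empty_empty, mul_one]
      exact Or.inl rfl
  · exact Or.inl rfl

theorem reducedProducts_eq_zero_or {Co D : Set (Fin n → ZMod 2)}
    {f : MvPolynomial (Fin n) (ZMod 2)} (hf : f ∈ reducedProducts n Co D) :
    f = 0 ∨ IsPseudoMonomial n f ∧ f ∈ neuralIdeal n Co := by
  obtain ⟨f₁, hf₁, f₂, hf₂, rfl⟩ := hf
  obtain ⟨σ, τ, -, rfl⟩ := isPseudoMonomial_iff.mp hf₁.2.1
  obtain ⟨σ', τ', -, rfl⟩ := isPseudoMonomial_iff.mp hf₂.2.1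
  rw [sqReduce_pseudoMonomial_mul]
  split_ifs with h
  · refine Or.inr ⟨⟨_, _, h, rfl⟩, ?_⟩
    rw [pseudoMonomial_union]
    exact Ideal.mul_mem_right _ _ hf₁.1
  · exact Or.inl rfl

theorem mem_minReducedProducts_of_mem_CF {Co D : Set (Fin n → ZMod 2)}
    {g : MvPolynomial (Fin n) (ZMod 2)} (hg : g ∈ CF n (neuralIdeal n Co))
    (hgP : g ∈ reducedProducts n Co D) : g ∈ minReducedProducts n Co D := by
  refine ⟨hgP, hg.2.1.ne_zero, ?_⟩
  rintro ⟨f, hf, p, hp, rfl⟩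
  rcases reducedProducts_eq_zero_or hf with rfl | ⟨hfpm, hfJ⟩
  · exact hg.2.1.ne_zero (zero_mul p)
  · exact IsMinimalPM.ne_mul hg hfpm hfJ hp rfl

theorem mem_reducedProducts_singleton_of_eval_eq_zero {Co : Set (Fin n → ZMod 2)}
    {c : Fin n → ZMod 2} {g : MvPolynomial (Fin n) (ZMod 2)} (hg : g ∈ CF n (neuralIdeal n Co))
    (hgc : eval c g = 0) :
    g ∈ reducedProducts n Co {c} := by
  obtain ⟨σ, τ, hστ, rfl⟩ := isPseudoMonomial_iff.mp hg.2.1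
  rw [eval_pseudoMonomial, pseudoMonomial_eq_zero_iff] at hgc
  obtain ⟨σ', τ', hσ', hτ', hdeg, hc⟩ : ∃ σ' τ', σ' ⊆ σ ∧ τ' ⊆ τ ∧
      (pseudoMonomial X σ' τ' : MvPolynomial (Fin n) (ZMod 2)).totalDegree = 1 ∧
      pseudoMonomial c σ' τ' = 0 := by
    rcases hgc with ⟨i, hi, hci⟩ | ⟨j, hj, hcj⟩
    · exact ⟨{i}, ∅, by simpa, by simp, by simp [pseudoMonomial], by simp [pseudoMonomial, hci]⟩
    · exact ⟨∅, {j}, by simp, by simpa, by simp [pseudoMonomial, totalDegree_one_sub_X],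
        by simp [pseudoMonomial, hcj]⟩
  have hdisj : Disjoint σ' τ' := hστ.mono hσ' hτ'
  refine ⟨_, hg, pseudoMonomial X σ' τ', isMinimalPM_of_totalDegree_eq_one
    (neuralIdeal_ne_top (Set.singleton_nonempty c)) ⟨σ', τ', hdisj, rfl⟩
    (pseudoMonomial_mem_neuralIdeal hdisj ?_) hdeg, ?_⟩
  · simpa [eval_pseudoMonomial] using hc
  · rw [sqReduce_pseudoMonomial_mul_of_subset hστ hσ' hτ']

theorem exists_pseudoMonomial_eq_X_sub_C {ι : Type*} (k : ι) (b : ZMod 2) :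
    ∃ σ τ, (X k - C b : MvPolynomial ι (ZMod 2)) = pseudoMonomial X σ τ := by
  rcases (by decide : ∀ b : ZMod 2, b = 0 ∨ b = 1) b with rfl | rfl
  · exact ⟨{k}, ∅, by simp [pseudoMonomial]⟩
  · refine ⟨∅, {k}, ?_⟩
    rw [pseudoMonomial, Finset.prod_empty, Finset.prod_singleton, one_mul, map_one, ← neg_sub,
      CharTwo.neg_eq]

end ReducedProducts

theorem stmt19_general (n : ℕ) (Co : Set (Fin n → ZMod 2)) (c : Fin n → ZMod 2)
    (g : MvPolynomial (Fin n) (ZMod 2))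
    (hg : g ∈ CF n (neuralIdeal n Co)) (hgc : eval c g = 0) :
    g ∈ minReducedProducts n Co {c} ∧
      ∀ j : Fin n, sqReduce n (g * (X j - C (c j))) = 0 ∨
        sqReduce n (g * (X j - C (c j))) = g ∨
        ∃ p : MvPolynomial (Fin n) (ZMod 2), 1 ≤ p.totalDegree ∧
          sqReduce n (g * (X j - C (c j))) = g * p := by
  refine ⟨mem_minReducedProducts_of_mem_CF hg
    (mem_reducedProducts_singleton_of_eval_eq_zero hg hgc), fun j => ?_⟩
  obtain ⟨σ, τ, -, rfl⟩ := isPseudoMonomial_iff.mp hg.2.1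
  obtain ⟨σ', τ', hℓ⟩ := exists_pseudoMonomial_eq_X_sub_C j (c j)
  rw [hℓ]
  exact sqReduce_pseudoMonomial_mul_trichotomy σ τ σ' τ'

/-- if `g ∈ CF(J_C)` and `g(c) = 0` then `g ∈ MP(C, {c})`, and every
reduced product `(g·(x_j - c_j))_R` is `0`, `g`, or a proper multiple of `g`. -/
theorem stmt19 (n : ℕ) (hn : 1 ≤ n) (Co : Set (Fin n → ZMod 2)) (c : Fin n → ZMod 2)
    (g : MvPolynomial (Fin n) (ZMod 2))
    (hg : g ∈ CF n (neuralIdeal n Co)) (hgc : eval c g = 0) :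
    g ∈ minReducedProducts n Co {c} ∧
      ∀ j : Fin n, sqReduce n (g * (X j - C (c j))) = 0 ∨
        sqReduce n (g * (X j - C (c j))) = g ∨
        ∃ p : MvPolynomial (Fin n) (ZMod 2), 1 ≤ p.totalDegree ∧
          sqReduce n (g * (X j - C (c j))) = g * p :=
  stmt19_general n Co c g hg hgc
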